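/- Let w ∈ ℝ_+^d and suppose a constrained homogeneous random walk satisfies ∑_{Δ} (w^T Δ) p(Λ,Δ) ≤ -γ for all nonempty faces Λ, with increments Δ bounded in max-norm by 1. Then there exists δ > 0 such that Φ_g(q) = exp(δ w^T q) satisfies E[Φ_g(Q(t+1)) | Q(t) = q] ≤ γ_g Φ_g(q) for all q ≠ 0, for some γ_g < 1. That is, a linear Lyapunov function yields a geometric Lyapunov function. -/

import Mathlib

/-!
From the current state, the increment of `wᵀ Q` is a random variable `X` with `|X| ≤ ‖w‖₁` and
mean at most `-γ`. Expanding `exp (δ X) ≤ 1 + δ X + (δ X)²` (valid for `|δ X| ≤ 1`) gives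
`E[exp (δ X)] ≤ 1 - δ γ + δ² ‖w‖₁²`, which is `< 1` for small `δ > 0`, uniformly in the state.
-/

open Finset Real

theorem Real.exp_le_one_add_add_sq {t : ℝ} (ht : |t| ≤ 1) : exp t ≤ 1 + t + t ^ 2 := by
  linarith [(abs_le.1 (abs_exp_sub_one_sub_id_le ht)).2]

theorem Finset.sum_mul_exp_le {ι : Type*} (s : Finset ι) {p X : ι → ℝ} {M γ δ : ℝ}
    (hp : ∀ i ∈ s, 0 ≤ p i) (hp1 : ∑ i ∈ s, p i = 1) (hX : ∀ i ∈ s, |X i| ≤ M)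
    (hmean : ∑ i ∈ s, X i * p i ≤ -γ) (hδ : 0 ≤ δ) (hδM : δ * M ≤ 1) :
    ∑ i ∈ s, p i * exp (δ * X i) ≤ 1 - δ * γ + δ ^ 2 * M ^ 2 := by
  have hsq : ∑ i ∈ s, X i ^ 2 * p i ≤ M ^ 2 := by
    calc ∑ i ∈ s, X i ^ 2 * p i ≤ ∑ i ∈ s, M ^ 2 * p i := by
          refine sum_le_sum fun i hi => mul_le_mul_of_nonneg_right ?_ (hp i hi)
          exact sq_le_sq' (abs_le.1 (hX i hi)).1 (abs_le.1 (hX i hi)).2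
      _ = M ^ 2 := by rw [← mul_sum, hp1, mul_one]
  calc ∑ i ∈ s, p i * exp (δ * X i)
      ≤ ∑ i ∈ s, p i * (1 + δ * X i + (δ * X i) ^ 2) := by
        refine sum_le_sum fun i hi => mul_le_mul_of_nonneg_left ?_ (hp i hi)
        refine exp_le_one_add_add_sq ?_
        rw [abs_mul, abs_of_nonneg hδ]
        exact (mul_le_mul_of_nonneg_left (hX i hi) hδ).trans hδM
    _ = ∑ i ∈ s, p i + δ * ∑ i ∈ s, X i * p i + δ ^ 2 * ∑ i ∈ s, X i ^ 2 * p i := by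
        simp only [mul_sum, ← sum_add_distrib]
        exact sum_congr rfl fun i _ => by ring
    _ ≤ 1 - δ * γ + δ ^ 2 * M ^ 2 := by
        rw [hp1]
        nlinarith [mul_le_mul_of_nonneg_left hmean hδ, mul_le_mul_of_nonneg_left hsq (sq_nonneg δ)]

theorem exists_sum_mul_exp_le_lt_one {M γ : ℝ} (hM : 0 ≤ M) (hγ : 0 < γ) :
    ∃ δ > 0, ∃ c < 1, ∀ {ι : Type*} (s : Finset ι) (p X : ι → ℝ),
      (∀ i ∈ s, 0 ≤ p i) → ∑ i ∈ s, p i = 1 → (∀ i ∈ s, |X i| ≤ M) →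
      ∑ i ∈ s, X i * p i ≤ -γ → ∑ i ∈ s, p i * exp (δ * X i) ≤ c := by
  -- the first term keeps `|δ X| ≤ 1`, the second makes `δ M ^ 2 < γ`
  set δ := min (1 / (M + 1)) (γ / (M ^ 2 + 1))
  have hδ : 0 < δ := lt_min (by positivity) (by positivity)
  have hδM : δ * M ≤ 1 := by
    calc δ * M ≤ 1 / (M + 1) * (M + 1) := by
          gcongr
          · exact min_le_left _ _
          · linarith
      _ = 1 := by field_simp
  have hδM2 : δ * M ^ 2 < γ := by
    calc δ * M ^ 2 < γ / (M ^ 2 + 1) * (M ^ 2 + 1) := by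
          refine mul_lt_mul' (min_le_right _ _) (by linarith) (sq_nonneg M) (by positivity)
      _ = γ := by field_simp
  refine ⟨δ, hδ, 1 - δ * γ + δ ^ 2 * M ^ 2, by nlinarith, ?_⟩
  intro ι s p X hp hp1 hX hmean
  exact s.sum_mul_exp_le hp hp1 hX hmean hδ.le hδM

theorem abs_sum_mul_le_sum_abs {ι : Type*} [Fintype ι] (w x : ι → ℝ) (hx : ∀ i, |x i| ≤ 1) :
    |∑ i, w i * x i| ≤ ∑ i, |w i| := by
  refine (abs_sum_le_sum_abs _ _).trans (sum_le_sum fun i _ => ?_)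
  rw [abs_mul]
  exact mul_le_of_le_one_right (abs_nonneg _) (hx i)

theorem tsum_eq_sum_piFinset_Icc {ι : Type*} [Fintype ι] [DecidableEq ι] {f : (ι → ℤ) → ℝ}
    (hf : ∀ Δ, f Δ ≠ 0 → ∀ i, |Δ i| ≤ 1) :
    ∑' Δ, f Δ = ∑ Δ ∈ Fintype.piFinset fun _ => Icc (-1 : ℤ) 1, f Δ :=
  tsum_eq_sum' fun Δ hΔ => Fintype.mem_piFinset.2 fun i => mem_Icc.2 (abs_le.1 (hf Δ hΔ i))

theorem stmt_12_general (d : ℕ)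
    (p : Set (Fin d) → (Fin d → ℤ) → ℝ)
    (hnn : ∀ Λ Δ, 0 ≤ p Λ Δ)
    (hbdd : ∀ Λ Δ, p Λ Δ ≠ 0 → ∀ i, |Δ i| ≤ 1)
    (hsum : ∀ Λ, ∑' Δ : Fin d → ℤ, p Λ Δ = 1)
    (w : Fin d → ℝ) (γ : ℝ) (hγ : 0 < γ)
    (hdrift : ∀ Λ : Set (Fin d), Λ.Nonempty →
      ∑' Δ : Fin d → ℤ, (∑ i, w i * (Δ i : ℝ)) * p Λ Δ ≤ -γ) :
    ∃ δ > 0, ∃ γg : ℝ, γg < 1 ∧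
      ∀ q : Fin d → ℕ, q ≠ 0 →
        (∑' Δ : Fin d → ℤ,
            p {i | 0 < q i} Δ * Real.exp (δ * ∑ i, w i * ((q i : ℝ) + (Δ i : ℝ))))
          ≤ γg * Real.exp (δ * ∑ i, w i * (q i : ℝ)) := by
  obtain ⟨δ, hδ, c, hc, hmoment⟩ :=
    exists_sum_mul_exp_le_lt_one (sum_nonneg fun i _ => abs_nonneg (w i)) hγ
  refine ⟨δ, hδ, c, hc, fun q hq => ?_⟩
  set Λ : Set (Fin d) := {i | 0 < q i}
  have hΛ : Λ.Nonempty := by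
    obtain ⟨i, hi⟩ := Function.ne_iff.1 hq
    exact ⟨i, Nat.pos_of_ne_zero hi⟩
  have hsupp {f : (Fin d → ℤ) → ℝ} (hf : ∀ Δ, f Δ ≠ 0 → p Λ Δ ≠ 0) :=
    tsum_eq_sum_piFinset_Icc fun Δ hΔ => hbdd Λ Δ (hf Δ hΔ)
  have hsplit (Δ : Fin d → ℤ) : p Λ Δ * exp (δ * ∑ i, w i * ((q i : ℝ) + (Δ i : ℝ))) =
      exp (δ * ∑ i, w i * (q i : ℝ)) * (p Λ Δ * exp (δ * ∑ i, w i * (Δ i : ℝ))) := by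
    simp only [mul_add, sum_add_distrib, exp_add]
    ring
  simp only [hsplit]
  rw [tsum_mul_left, mul_comm c]
  refine mul_le_mul_of_nonneg_left ?_ (exp_pos _).le
  rw [hsupp fun Δ => left_ne_zero_of_mul]
  refine hmoment _ (p Λ) _ (fun Δ _ => hnn Λ Δ) ?_ ?_ ?_
  · rw [← hsupp fun Δ => id, hsum]
  · intro Δ hΔ
    refine abs_sum_mul_le_sum_abs w _ fun i => ?_
    exact_mod_cast (abs_le.2 (mem_Icc.1 (Fintype.mem_piFinset.1 hΔ i)))
  · rw [← hsupp fun Δ => right_ne_zero_of_mul]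
    exact hdrift Λ hΛ

/-- A linear Lyapunov function yields a geometric Lyapunov function
    Φ_g(q) = exp(δ wᵀ q) for sufficiently small δ > 0. -/
theorem stmt_12 (d : ℕ) (hd : 0 < d)
    (p : Set (Fin d) → (Fin d → ℤ) → ℝ)
    (hnn : ∀ Λ Δ, 0 ≤ p Λ Δ)
    (hbdd : ∀ Λ Δ, p Λ Δ ≠ 0 → ∀ i, |Δ i| ≤ 1)
    (hsum : ∀ Λ, ∑' Δ : Fin d → ℤ, p Λ Δ = 1)
    (hcons : ∀ Λ Δ, (∃ i, i ∉ Λ ∧ Δ i = -1) → p Λ Δ = 0)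
    (w : Fin d → ℝ) (hw : ∀ i, 0 ≤ w i) (γ : ℝ) (hγ : 0 < γ)
    (hdrift : ∀ Λ : Set (Fin d), Λ.Nonempty →
      ∑' Δ : Fin d → ℤ, (∑ i, w i * (Δ i : ℝ)) * p Λ Δ ≤ -γ) :
    ∃ δ > 0, ∃ γg : ℝ, γg < 1 ∧
      ∀ q : Fin d → ℕ, q ≠ 0 →
        (∑' Δ : Fin d → ℤ,
            p {i | 0 < q i} Δ * Real.exp (δ * ∑ i, w i * ((q i : ℝ) + (Δ i : ℝ))))
          ≤ γg * Real.exp (δ * ∑ i, w i * (q i : ℝ)) :=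
  stmt_12_general d p hnn hbdd hsum w γ hγ hdrift
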